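/- Brzozowski product rule for the free-monoid algebra: for a semiring R, a type α, and c : α, the Brzozowski derivative δ c satisfies, for all f, g : MonoidAlgebra R (FreeMonoid α), δ c (f * g) = (f 1) • δ c g + (δ c f) * g, where f 1 is the coefficient of f at the empty word and • is the scalar action of R on finitely supported functions. -/

import Mathlib

open scoped Classical

/-- The Brzozowski derivative of `f : MonoidAlgebra R (FreeMonoid α)` with respect to
a character `c : α`: the finitely supported function `w ↦ f (FreeMonoid.of c * w)`. -/
noncomputable def brzDeriv {R α : Type*} [Semiring R] (c : α)
    (f : MonoidAlgebra R (FreeMonoid α)) : MonoidAlgebra R (FreeMonoid α) :=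
  MonoidAlgebra.ofCoeff (Finsupp.comapDomain (fun w => FreeMonoid.of c * w) f.coeff
    ((mul_right_injective (FreeMonoid.of c)).injOn))

theorem brzDeriv_apply {R α : Type*} [Semiring R] (c : α)
    (f : MonoidAlgebra R (FreeMonoid α)) (w : FreeMonoid α) :
    (brzDeriv c f).coeff w = f.coeff (FreeMonoid.of c * w) := rfl

theorem brzDeriv_add {R α : Type*} [Semiring R] (c : α)
    (f g : MonoidAlgebra R (FreeMonoid α)) :
    brzDeriv c (f + g) = brzDeriv c f + brzDeriv c g := by
  ext w
  simp only [brzDeriv_apply, MonoidAlgebra.coeff_add, Finsupp.add_apply]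

theorem brzDeriv_single_of_mul {R α : Type*} [Semiring R] (c c' : α)
    (h : MonoidAlgebra R (FreeMonoid α)) :
    brzDeriv c (MonoidAlgebra.single (FreeMonoid.of c') 1 * h) =
      if c' = c then h else 0 := by
  ext w
  rw [brzDeriv_apply]
  by_cases hc : c' = c
  · subst hc
    rw [MonoidAlgebra.coeff_single_mul_eq_mul_coeff _
      (fun a _ => (mul_right_injective (FreeMonoid.of c')).eq_iff), one_mul, if_pos rfl]
  · rw [MonoidAlgebra.single_mul_apply_of_not_exists_mul, if_neg hc]
    · rfl
    · rintro ⟨d, hd⟩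
      apply hc
      have := congrArg FreeMonoid.toList hd
      simp only [FreeMonoid.toList_of_mul] at this
      exact (List.cons.injEq _ _ _ _ ▸ this).1.symm

theorem brzDeriv_single {R α : Type*} [Semiring R] (c c' : α) (t : FreeMonoid α) (b : R) :
    brzDeriv c (MonoidAlgebra.single (FreeMonoid.of c' * t) b) =
      if c' = c then MonoidAlgebra.single t b else 0 := by
  have : MonoidAlgebra.single (FreeMonoid.of c' * t) b =
      MonoidAlgebra.single (FreeMonoid.of c') 1 * MonoidAlgebra.single t b := by
    rw [MonoidAlgebra.single_mul_single, one_mul]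
  rw [this, brzDeriv_single_of_mul]

theorem brzDeriv_mul_single {R α : Type*} [Semiring R] (c : α) (a : FreeMonoid α) (b : R)
    (g : MonoidAlgebra R (FreeMonoid α)) :
    brzDeriv c (MonoidAlgebra.single a b * g) =
      (MonoidAlgebra.single a b : MonoidAlgebra R (FreeMonoid α)).coeff 1 • brzDeriv c g +
        brzDeriv c (MonoidAlgebra.single a b) * g := by
  induction a using FreeMonoid.casesOn with
  | one =>
    have h1 : brzDeriv c (MonoidAlgebra.single (1 : FreeMonoid α) b) = 0 := by
      ext w
      rw [brzDeriv_apply, MonoidAlgebra.coeff_single, Finsupp.single_apply, if_neg,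
        MonoidAlgebra.coeff_zero, Finsupp.coe_zero, Pi.zero_apply]
      intro h
      exact List.cons_ne_nil c _ (congrArg FreeMonoid.toList h).symm
    rw [h1, zero_mul, add_zero, MonoidAlgebra.coeff_single, Finsupp.single_apply, if_pos rfl]
    ext w
    rw [brzDeriv_apply, MonoidAlgebra.coeff_single_one_mul, MonoidAlgebra.coeff_smul, Finsupp.smul_apply,
      brzDeriv_apply, smul_eq_mul]
  | of_mul c' t =>
    have h1 : (MonoidAlgebra.single (FreeMonoid.of c' * t) b :
        MonoidAlgebra R (FreeMonoid α)).coeff 1 = 0 := by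
      rw [MonoidAlgebra.coeff_single, Finsupp.single_apply, if_neg]
      intro h
      exact List.cons_ne_nil c' _ (congrArg FreeMonoid.toList h)
    have h2 : MonoidAlgebra.single (FreeMonoid.of c' * t) b * g =
        MonoidAlgebra.single (FreeMonoid.of c') 1 * (MonoidAlgebra.single t b * g) := by
      rw [← mul_assoc, MonoidAlgebra.single_mul_single, one_mul]
    rw [h1, zero_smul, zero_add, h2, brzDeriv_single_of_mul, brzDeriv_single]
    split_ifs <;> simp

/-- Brzozowski product rule for the free-monoid algebra:
`δ c (f * g) = (f 1) • δ c g + (δ c f) * g`. -/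
theorem brzDeriv_mul {R α : Type*} [Semiring R] (c : α)
    (f g : MonoidAlgebra R (FreeMonoid α)) :
    brzDeriv c (f * g) = f.coeff 1 • brzDeriv c g + brzDeriv c f * g := by
  induction f using MonoidAlgebra.induction with
  | zero =>
    simp only [zero_mul, MonoidAlgebra.coeff_zero, Finsupp.coe_zero, Pi.zero_apply, zero_smul]
    have : brzDeriv c (0 : MonoidAlgebra R (FreeMonoid α)) = 0 := by ext w; rfl
    rw [this, zero_mul, add_zero]
  | single_add a b f _ _ ih =>
    rw [add_mul, brzDeriv_add, brzDeriv_add, ih, brzDeriv_mul_single,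
      MonoidAlgebra.coeff_add, Finsupp.add_apply, add_smul, add_mul]
    abel
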